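/- Let S be a nonempty finite type, P a γ-contractive row-stochastic matrix on S with γ ∈ [0,1), d∞ a stationary distribution of P, g : S → ℝ with 0 ≤ g s ≤ 1, η = ∑_s d∞ s · g s, and let h(s) = ∑_{m=0}^{∞} ((e_s ⬝ P^m) · g − η) be the bias vector (the series converges absolutely). Then h satisfies the Bellman equation h(s) = g(s) − η + ∑_{s'} P(s,s') · h(s') for every s ∈ S, and the normalization ∑_s d∞ s · h(s) = 0. -/

import Mathlib

/-! The `m`-th term of the bias series at `s` is `(Pᵐ g)(s) − η = (e_s Pᵐ − d∞ Pᵐ) · g`, so by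
contractivity it is bounded by `‖e_s − d∞‖₁ γᵐ ≤ 2 γᵐ` and the series converges absolutely.
Peeling off the term `m = 0` and using `Pᵐ⁺¹ g = P (Pᵐ g)` gives the Bellman equation, and
stationarity `d∞ Pᵐ = d∞` makes every term of `∑_s d∞(s) h(s)` equal to `d∞ · g − η = 0`. -/

/-- A probability vector on a finite type: nonnegative entries summing to 1. -/
def IsProbVec {S : Type*} [Fintype S] (d : S → ℝ) : Prop :=
  (∀ s, 0 ≤ d s) ∧ ∑ s, d s = 1

/-- A row-stochastic matrix: every row is a probability vector. -/
def RowStochastic {S : Type*} [Fintype S] (P : S → S → ℝ) : Prop :=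
  ∀ s, IsProbVec (P s)

/-- Row-vector–matrix multiplication: (d ⬝ P) s' = ∑ s, d s · P s s'. -/
def vmul {S : Type*} [Fintype S] (d : S → ℝ) (P : S → S → ℝ) : S → ℝ :=
  fun s' => ∑ s, d s * P s s'

/-- `iter d P m = d ⬝ P^m`. -/
def iter {S : Type*} [Fintype S] (d : S → ℝ) (P : S → S → ℝ) : ℕ → S → ℝ
  | 0 => d
  | m + 1 => vmul (iter d P m) P

/-- L1 norm of a vector: ‖x‖₁ = ∑ s, |x s|. -/
def l1 {S : Type*} [Fintype S] (x : S → ℝ) : ℝ := ∑ s, |x s|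

/-- Dot product x · v = ∑ s, x s · v s. -/
def dot {S : Type*} [Fintype S] (x v : S → ℝ) : ℝ := ∑ s, x s * v s

/-- The point-mass probability vector at `s`. -/
def pm {S : Type*} [DecidableEq S] (s : S) : S → ℝ := fun s' => if s' = s then 1 else 0

/-- γ-contractivity. -/
def Contractive {S : Type*} [Fintype S] (γ : ℝ) (P : S → S → ℝ) : Prop :=
  ∀ d d' : S → ℝ, IsProbVec d → IsProbVec d' →
    l1 (fun s => vmul d P s - vmul d' P s) ≤ γ * l1 (fun s => d s - d' s)

open Matrix

section

variable {S : Type*} [Fintype S]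

theorem isProbVec_vmul {d : S → ℝ} {P : S → S → ℝ} (hd : IsProbVec d) (hP : RowStochastic P) :
    IsProbVec (vmul d P) := by
  refine ⟨fun u => Finset.sum_nonneg fun t _ => mul_nonneg (hd.1 t) ((hP t).1 u), ?_⟩
  calc ∑ u, vmul d P u = ∑ t, d t * ∑ u, P t u := by
        simp only [vmul, Finset.mul_sum]; exact Finset.sum_comm
    _ = 1 := by simp [fun t => (hP t).2, hd.2]

theorem isProbVec_iter {d : S → ℝ} {P : S → S → ℝ} (hd : IsProbVec d) (hP : RowStochastic P) :
    ∀ m, IsProbVec (iter d P m)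
  | 0 => hd
  | m + 1 => isProbVec_vmul (isProbVec_iter hd hP m) hP

theorem IsProbVec.l1_sub_le_two {d d' : S → ℝ} (hd : IsProbVec d) (hd' : IsProbVec d') :
    l1 (fun s => d s - d' s) ≤ 2 := by
  calc l1 (fun s => d s - d' s) ≤ ∑ s, (d s + d' s) :=
        Finset.sum_le_sum fun s _ => (abs_sub _ _).trans_eq <| by
          rw [abs_of_nonneg (hd.1 s), abs_of_nonneg (hd'.1 s)]
    _ = 2 := by rw [Finset.sum_add_distrib, hd.2, hd'.2]; norm_num

theorem abs_dot_le_l1 {g : S → ℝ} (hg : ∀ s, |g s| ≤ 1) (x : S → ℝ) : |dot x g| ≤ l1 x :=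
  (Finset.abs_sum_le_sum_abs _ _).trans <| Finset.sum_le_sum fun s _ => by
    rw [abs_mul]; exact mul_le_of_le_one_right (abs_nonneg _) (hg s)

theorem Contractive.l1_iter_sub_le {γ : ℝ} {P : S → S → ℝ} (hc : Contractive γ P) (hγ : 0 ≤ γ)
    (hP : RowStochastic P) {d d' : S → ℝ} (hd : IsProbVec d) (hd' : IsProbVec d') (m : ℕ) :
    l1 (fun s => iter d P m s - iter d' P m s) ≤ γ ^ m * l1 (fun s => d s - d' s) := by
  induction m with
  | zero => simp [iter]
  | succ m ih =>
    calc l1 (fun s => iter d P (m + 1) s - iter d' P (m + 1) s)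
        ≤ γ * l1 (fun s => iter d P m s - iter d' P m s) :=
          hc _ _ (isProbVec_iter hd hP m) (isProbVec_iter hd' hP m)
      _ ≤ γ * (γ ^ m * l1 (fun s => d s - d' s)) := mul_le_mul_of_nonneg_left ih hγ
      _ = γ ^ (m + 1) * l1 (fun s => d s - d' s) := by ring

end

section

variable {S : Type*} [Fintype S] [DecidableEq S]

theorem iter_eq_vecMul_pow (d : S → ℝ) (P : Matrix S S ℝ) (m : ℕ) : iter d P m = d ᵥ* P ^ m := by
  induction m with
  | zero => simp [iter]
  | succ m ih => rw [pow_succ, ← vecMul_vecMul, ← ih]; rfl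

theorem dot_iter_pm (P : Matrix S S ℝ) (g : S → ℝ) (s : S) (m : ℕ) :
    dot (iter (pm s) P m) g = (P ^ m *ᵥ g) s := by
  rw [iter_eq_vecMul_pow, dot, ← dotProduct, ← dotProduct_mulVec]
  simp [dotProduct, pm]

theorem vecMul_pow_eq_self {d : S → ℝ} {P : Matrix S S ℝ} (hstat : d ᵥ* P = d) (m : ℕ) :
    d ᵥ* P ^ m = d := by
  induction m with
  | zero => simp
  | succ m ih => rw [pow_succ, ← vecMul_vecMul, ih, hstat]

theorem isProbVec_pm (s : S) : IsProbVec (pm s) :=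
  ⟨fun u => by unfold pm; split <;> norm_num, by simp [pm]⟩

theorem Contractive.abs_pow_mulVec_sub_le {γ : ℝ} {P : Matrix S S ℝ}
    (hc : Contractive γ P) (hγ : 0 ≤ γ) (hP : RowStochastic P) {dinf : S → ℝ}
    (hdinf : IsProbVec dinf) (hstat : dinf ᵥ* P = dinf) {g : S → ℝ} (hg : ∀ s, |g s| ≤ 1)
    (s : S) (m : ℕ) : |(P ^ m *ᵥ g) s - dinf ⬝ᵥ g| ≤ 2 * γ ^ m := by
  have hdiff :
      (P ^ m *ᵥ g) s - dinf ⬝ᵥ g = dot (fun u => iter (pm s) P m u - iter dinf P m u) g := by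
    rw [← dot_iter_pm, iter_eq_vecMul_pow dinf, vecMul_pow_eq_self hstat]
    simp only [dot, dotProduct, sub_mul, Finset.sum_sub_distrib]
  calc |(P ^ m *ᵥ g) s - dinf ⬝ᵥ g|
      ≤ l1 (fun u => iter (pm s) P m u - iter dinf P m u) := hdiff ▸ abs_dot_le_l1 hg _
    _ ≤ γ ^ m * l1 (fun u => pm s u - dinf u) := hc.l1_iter_sub_le hγ hP (isProbVec_pm s) hdinf m
    _ ≤ γ ^ m * 2 :=
      mul_le_mul_of_nonneg_left ((isProbVec_pm s).l1_sub_le_two hdinf) (pow_nonneg hγ m)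
    _ = 2 * γ ^ m := mul_comm _ _

theorem tsum_pow_mulVec_sub_eq_bellman {P : Matrix S S ℝ} (hrow : ∀ s, ∑ t, P s t = 1)
    {g : S → ℝ} {η : ℝ} (hsum : ∀ s, Summable fun m => (P ^ m *ᵥ g) s - η) (s : S) :
    ∑' m, ((P ^ m *ᵥ g) s - η) = g s - η + ∑ t, P s t * ∑' m, ((P ^ m *ᵥ g) t - η) := by
  have hstep : ∀ m, (P ^ (m + 1) *ᵥ g) s - η = ∑ t, P s t * ((P ^ m *ᵥ g) t - η) := fun m => by
    rw [pow_succ', ← mulVec_mulVec]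
    simp only [mulVec, dotProduct, mul_sub, Finset.sum_sub_distrib, ← Finset.sum_mul, hrow, one_mul]
  rw [(hsum s).tsum_eq_zero_add, pow_zero, one_mulVec]
  simp only [hstep, ← tsum_mul_left]
  rw [Summable.tsum_finsetSum fun t _ => (hsum t).mul_left _]

theorem sum_mul_tsum_pow_mulVec_sub_eq_zero {P : Matrix S S ℝ} {d : S → ℝ} (hd : ∑ s, d s = 1)
    (hstat : d ᵥ* P = d) {g : S → ℝ} (hsum : ∀ s, Summable fun m => (P ^ m *ᵥ g) s - d ⬝ᵥ g) :
    ∑ s, d s * ∑' m, ((P ^ m *ᵥ g) s - d ⬝ᵥ g) = 0 := by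
  have hterm : ∀ m, ∑ s, d s * ((P ^ m *ᵥ g) s - d ⬝ᵥ g) = 0 := fun m => by
    have : d ⬝ᵥ (P ^ m *ᵥ g) = d ⬝ᵥ g := by rw [dotProduct_mulVec, vecMul_pow_eq_self hstat]
    simp only [mul_sub, Finset.sum_sub_distrib, ← Finset.sum_mul, hd, one_mul]
    exact sub_eq_zero.mpr this
  simp only [← tsum_mul_left]
  rw [← Summable.tsum_finsetSum fun s _ => (hsum s).mul_left _]
  simp [hterm]

end

theorem stmt_7_general {S : Type*} [Fintype S] [DecidableEq S]
    (P : S → S → ℝ) (γ : ℝ) (hγ0 : 0 ≤ γ) (hγ1 : γ < 1)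
    (hP : RowStochastic P) (hc : Contractive γ P)
    (dinf : S → ℝ) (hdinf : IsProbVec dinf) (hstat : vmul dinf P = dinf)
    (g : S → ℝ) (hg : ∀ s, 0 ≤ g s ∧ g s ≤ 1)
    (η : ℝ) (hη : η = ∑ s, dinf s * g s)
    (h : S → ℝ) (hh : ∀ s, h s = ∑' m : ℕ, (dot (iter (pm s) P m) g - η)) :
    (∀ s, h s = g s - η + ∑ s', P s s' * h s') ∧ (∑ s, dinf s * h s = 0) := by
  have hη' : η = dinf ⬝ᵥ g := hη
  have hh' : ∀ s, h s = ∑' m, ((of P ^ m *ᵥ g) s - η) := fun s =>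
    (hh s).trans <| tsum_congr fun m => congrArg (· - η) (dot_iter_pm (of P) g s m)
  have hsum : ∀ s, Summable fun m => (of P ^ m *ᵥ g) s - η := fun s =>
    .of_norm_bounded ((summable_geometric_of_lt_one hγ0 hγ1).mul_left 2) fun m =>
      hη' ▸ hc.abs_pow_mulVec_sub_le hγ0 hP hdinf hstat
        (fun s => abs_le.mpr ⟨by linarith [hg s], (hg s).2⟩) s m
  refine ⟨fun s => ?_, ?_⟩
  · rw [hh' s, tsum_pow_mulVec_sub_eq_bellman (P := of P) (fun s => (hP s).2) hsum s]
    simp only [hh', of_apply]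
  · subst hη'
    simp only [hh']
    exact sum_mul_tsum_pow_mulVec_sub_eq_zero hdinf.2 hstat hsum

/-- the bias vector h(s) = ∑_{m≥0} ((e_s ⬝ P^m)·g − η), where
η = d∞ · g, satisfies the Bellman equation h(s) = g(s) − η + ∑_{s'} P(s,s')·h(s')
and the normalization ∑_s d∞(s)·h(s) = 0. -/
theorem stmt_7 {S : Type*} [Fintype S] [Nonempty S] [DecidableEq S]
    (P : S → S → ℝ) (γ : ℝ) (hγ0 : 0 ≤ γ) (hγ1 : γ < 1)
    (hP : RowStochastic P) (hc : Contractive γ P)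
    (dinf : S → ℝ) (hdinf : IsProbVec dinf) (hstat : vmul dinf P = dinf)
    (g : S → ℝ) (hg : ∀ s, 0 ≤ g s ∧ g s ≤ 1)
    (η : ℝ) (hη : η = ∑ s, dinf s * g s)
    (h : S → ℝ) (hh : ∀ s, h s = ∑' m : ℕ, (dot (iter (pm s) P m) g - η)) :
    (∀ s, h s = g s - η + ∑ s', P s s' * h s') ∧ (∑ s, dinf s * h s = 0) :=
  stmt_7_general P γ hγ0 hγ1 hP hc dinf hdinf hstat g hg η hη h hh
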